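/- Let g : ℝ × ℝ^m → ℂ^{r×r}, g(y,t) = e^{-φ(y,t)} A(y), where φ : ℝ^{1+m} → ℝ is twice differentiable and convex, and A is a metric on ℝ with Θ^A := (d/dy)(A⁻¹ dA/dy) negative semidefinite (as a Hermitian form with respect to g). Then g is log concave in the sense of Nakano on ℝ^{1+m}. -/

import Mathlib

open scoped ComplexOrder
open Matrix MeasureTheory

section Preamble

variable {ι : Type*} [Fintype ι] [DecidableEq ι] {r : ℕ}

/-- Partial derivative of a complex-valued function on `ι → ℝ` in direction `j`. -/
noncomputable def pdC (j : ι) (f : (ι → ℝ) → ℂ) (x : ι → ℝ) : ℂ :=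
  fderiv ℝ f x (Pi.single j 1)

/-- Partial derivative of a real-valued function on `ι → ℝ` in direction `j`. -/
noncomputable def pdR (j : ι) (f : (ι → ℝ) → ℝ) (x : ι → ℝ) : ℝ :=
  fderiv ℝ f x (Pi.single j 1)

/-- Entrywise partial derivative of a matrix-valued function. -/
noncomputable def mpd (j : ι) (g : (ι → ℝ) → Matrix (Fin r) (Fin r) ℂ) (x : ι → ℝ) :
    Matrix (Fin r) (Fin r) ℂ :=
  Matrix.of fun a b => pdC j (fun y => g y a b) x

/-- The curvature-type quantity `Θ_{jk} = ∂_{x_k}(g⁻¹ ∂_{x_j} g)`. -/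
noncomputable def Theta (g : (ι → ℝ) → Matrix (Fin r) (Fin r) ℂ) (j k : ι) (x : ι → ℝ) :
    Matrix (Fin r) (Fin r) ℂ :=
  mpd k (fun y => (g y)⁻¹ * mpd j g y) x

/-- The pairing `(u, v)_g = v* g u`. -/
noncomputable def ip (g : Matrix (Fin r) (Fin r) ℂ) (u v : Fin r → ℂ) : ℂ :=
  star v ⬝ᵥ g.mulVec u

/-- A metric: twice differentiable entries, Hermitian positive definite values. -/
def IsMetric (g : (ι → ℝ) → Matrix (Fin r) (Fin r) ℂ) : Prop :=
  (∀ x, (g x).PosDef) ∧ ∀ a b, ContDiff ℝ 2 fun x => g x a b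

/-- Log concavity in the sense of Nakano. -/
def NakanoLogConcave (g : (ι → ℝ) → Matrix (Fin r) (Fin r) ℂ) : Prop :=
  ∀ (x : ι → ℝ) (u : ι → Fin r → ℂ),
    ∑ j, ∑ k, ip (g x) ((Theta g j k x).mulVec (u j)) (u k) ≤ 0

/-- Log concavity in the sense of Griffiths. -/
def GriffithsLogConcave (g : (ι → ℝ) → Matrix (Fin r) (Fin r) ℂ) : Prop :=
  ∀ (x : ι → ℝ) (u : Fin r → ℂ) (v : ι → ℂ),
    ∑ j, ∑ k, ip (g x) ((Theta g j k x).mulVec u) u * (v j * star (v k)) ≤ 0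

end Preamble

/-- Entrywise derivative of a matrix-valued function of one real variable. -/
noncomputable def mderiv {r : ℕ} (A : ℝ → Matrix (Fin r) (Fin r) ℂ) (s : ℝ) :
    Matrix (Fin r) (Fin r) ℂ :=
  Matrix.of fun a b => deriv (fun t => A t a b) s

/-- `Θ^A = (d/dy)(A⁻¹ dA/dy)` for a metric on `ℝ`. -/
noncomputable def ThetaOne {r : ℕ} (A : ℝ → Matrix (Fin r) (Fin r) ℂ) (y : ℝ) :
    Matrix (Fin r) (Fin r) ℂ :=
  mderiv (fun s => (A s)⁻¹ * mderiv A s) y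

/-!
With `g = e^{-φ} A(x₀)` the logarithmic derivative is `g⁻¹ ∂_j g = -∂_jφ · 1 + δ_{j0} A⁻¹A'`,
hence `Θ^g_{jk} = -∂_k∂_jφ · 1 + δ_{j0} δ_{k0} Θ^A`. The Nakano form at `u` is therefore
`e^{-φ}` times `(Θ^A u₀, u₀)_A - Σ_{j,k} ∂_j∂_kφ (u_k, u_j)_A`. The first term is nonpositive by
assumption; the sum is nonnegative, being the quadratic form of the Kronecker product of the
Hessian of `φ` (positive semidefinite by convexity) with `A(x₀)`.
-/

lemma Matrix.PosSemidef.map_ofReal {n : Type*} [Fintype n] {H : Matrix n n ℝ}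
    (hH : H.PosSemidef) : (H.map ((↑) : ℝ → ℂ)).PosSemidef := by
  classical
  open scoped MatrixOrder in
  obtain ⟨B, rfl⟩ := CStarAlgebra.nonneg_iff_eq_star_mul_self.mp hH.nonneg
  have : (star B * B).map ((↑) : ℝ → ℂ) = (B.map (↑))ᴴ * B.map (↑) := by
    have hmap : (Bᴴ).map ((↑) : ℝ → ℂ) = (B.map (↑))ᴴ := by ext; simp
    rw [star_eq_conjTranspose, ← hmap]
    exact Matrix.map_mul (f := Complex.ofRealHom)
  rw [this]
  exact posSemidef_conjTranspose_mul_self _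

-- The double sum is the quadratic form of `H ⊗ₖ G` at the vector `(j, a) ↦ u j a`.
lemma Matrix.PosSemidef.sum_sum_mul_star_dotProduct_mulVec_nonneg {𝕜 ι n : Type*} [RCLike 𝕜]
    [Fintype ι] [Fintype n] {H : Matrix ι ι 𝕜} {G : Matrix n n 𝕜} (hH : H.PosSemidef)
    (hG : G.PosSemidef) (u : ι → n → 𝕜) :
    0 ≤ ∑ j, ∑ k, H j k * (star (u j) ⬝ᵥ G *ᵥ u k) := by
  convert (hH.kronecker hG).dotProduct_mulVec_nonneg (Function.uncurry u) using 1
  simp only [dotProduct, mulVec, Fintype.sum_prod_type, kroneckerMap_apply, Finset.mul_sum,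
    Function.uncurry_apply_pair, Pi.star_apply]
  refine Finset.sum_congr rfl fun j _ => Finset.sum_comm.trans ?_
  simp only [mul_assoc, mul_left_comm]

lemma ConvexOn.fderiv_fderiv_apply_self_nonneg {E : Type*} [NormedAddCommGroup E]
    [NormedSpace ℝ E] {φ : E → ℝ} (hcvx : ConvexOn ℝ Set.univ φ) (hφ : Differentiable ℝ φ)
    {x : E} (hφ' : DifferentiableAt ℝ (fderiv ℝ φ) x) (v : E) :
    0 ≤ fderiv ℝ (fderiv ℝ φ) x v v := by
  set ψ : ℝ → ℝ := fun t => φ (x + t • v)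
  have hline : ∀ t : ℝ, HasDerivAt (fun t : ℝ => x + t • v) v t := fun t => by
    simpa using ((hasDerivAt_id t).smul_const v).const_add x
  have hψ' : deriv ψ = fun t => fderiv ℝ φ (x + t • v) v :=
    funext fun t => ((hφ _).hasFDerivAt.comp_hasDerivAt t (hline t)).deriv
  have hψcvx : ConvexOn ℝ Set.univ ψ := by
    have hψ : ψ = φ ∘ AffineMap.lineMap x (x + v) := by
      ext t
      simp [ψ, AffineMap.lineMap_apply_module', add_comm]
    simpa [hψ] using hcvx.comp_affineMap (AffineMap.lineMap x (x + v) : ℝ →ᵃ[ℝ] E)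
  have hmono : Monotone (deriv ψ) := monotoneOn_univ.mp <| hψcvx.monotoneOn_deriv fun t _ =>
    ((hφ _).hasFDerivAt.comp_hasDerivAt t (hline t)).differentiableAt
  have hψ'' : HasDerivAt (deriv ψ) (fderiv ℝ (fderiv ℝ φ) x v v) 0 := by
    rw [hψ']
    have := hφ'.hasFDerivAt.comp_hasDerivAt_of_eq 0 (hline 0) (by simp)
    simpa [Function.comp_def] using
      (ContinuousLinearMap.apply ℝ ℝ v).hasFDerivAt.comp_hasDerivAt 0 this
  simpa [hψ''.deriv] using hmono.deriv_nonneg (x := 0)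

lemma ContinuousLinearMap.apply_apply_eq_dotProduct_mulVec {ι : Type*} [Fintype ι]
    [DecidableEq ι] (B : (ι → ℝ) →L[ℝ] (ι → ℝ) →L[ℝ] ℝ) (v w : ι → ℝ) :
    B v w = v ⬝ᵥ (Matrix.of fun j k => B (Pi.single j 1) (Pi.single k 1)) *ᵥ w := by
  set B' : (ι → ℝ) →ₗ[ℝ] (ι → ℝ) →ₗ[ℝ] ℝ :=
    LinearMap.mk₂ ℝ (fun v w => B v w) (by simp) (by simp) (by simp) (by simp)
  have hM : (Matrix.of fun j k => B (Pi.single j 1) (Pi.single k 1))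
      = LinearMap.toMatrix₂' ℝ B' := by
    ext j k
    simp [B']
  rw [hM, ← Matrix.toLinearMap₂'_apply', Matrix.toLinearMap₂'_toMatrix']
  rfl

lemma pdR_pdR_eq_fderiv_fderiv {ι : Type*} [Fintype ι] [DecidableEq ι] {φ : (ι → ℝ) → ℝ}
    {x : ι → ℝ} (hφ' : DifferentiableAt ℝ (fderiv ℝ φ) x) (j k : ι) :
    pdR j (pdR k φ) x = fderiv ℝ (fderiv ℝ φ) x (Pi.single j 1) (Pi.single k 1) := by
  unfold pdR
  rw [fderiv_clm_apply hφ' (differentiableAt_const _)]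
  simp

lemma ConvexOn.posSemidef_pdR_pdR {ι : Type*} [Fintype ι] [DecidableEq ι]
    {φ : (ι → ℝ) → ℝ} (hcvx : ConvexOn ℝ Set.univ φ) (hφ : Differentiable ℝ φ) {x : ι → ℝ}
    (hφ' : DifferentiableAt ℝ (fderiv ℝ φ) x) :
    (Matrix.of fun j k => pdR j (pdR k φ) x).PosSemidef := by
  simp only [pdR_pdR_eq_fderiv_fderiv hφ']
  refine Matrix.posSemidef_iff_dotProduct_mulVec.mpr ⟨?_, fun v => ?_⟩
  · ext j k
    exact second_derivative_symmetric (fun y => (hφ y).hasFDerivAt) hφ'.hasFDerivAt _ _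
  · rw [star_trivial, ← ContinuousLinearMap.apply_apply_eq_dotProduct_mulVec]
    exact hcvx.fderiv_fderiv_apply_self_nonneg hφ hφ' v

section MatrixInverse

variable {E : Type*} [NormedAddCommGroup E] [NormedSpace ℝ E] {n : Type*} [Fintype n]
  [DecidableEq n] {f : E → Matrix n n ℂ} {x : E}

lemma differentiableAt_det (hf : ∀ a b, DifferentiableAt ℝ (fun y => f y a b) x) :
    DifferentiableAt ℝ (fun y => (f y).det) x := by
  simp only [Matrix.det_apply, Units.smul_def, zsmul_eq_mul]
  fun_prop

lemma differentiableAt_inv_apply (hf : ∀ a b, DifferentiableAt ℝ (fun y => f y a b) x)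
    (hdet : (f x).det ≠ 0) (a b : n) : DifferentiableAt ℝ (fun y => (f y)⁻¹ a b) x := by
  simp only [Matrix.inv_def, Ring.inverse_eq_inv', Matrix.smul_apply, smul_eq_mul,
    Matrix.adjugate_apply]
  refine ((differentiableAt_det hf).inv hdet).mul (differentiableAt_det fun i k => ?_)
  by_cases hi : i = b
  · simp [hi]
  · simpa [Matrix.updateRow_ne hi] using hf i k

end MatrixInverse

section PartialDerivatives

variable {ι : Type*} [DecidableEq ι] {r : ℕ} {x : ι → ℝ} {j : ι}

lemma mpd_const (M : Matrix (Fin r) (Fin r) ℂ) : mpd j (fun _ => M) x = 0 := by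
  ext a b
  simp [mpd, pdC]

variable [Fintype ι]

lemma pdC_neg (f : (ι → ℝ) → ℂ) : pdC j (fun y => -f y) x = -pdC j f x := by
  simp [pdC, fderiv_fun_neg]

lemma pdC_add {f g : (ι → ℝ) → ℂ} (hf : DifferentiableAt ℝ f x) (hg : DifferentiableAt ℝ g x) :
    pdC j (fun y => f y + g y) x = pdC j f x + pdC j g x := by
  simp [pdC, fderiv_fun_add hf hg]

lemma pdC_mul {f g : (ι → ℝ) → ℂ} (hf : DifferentiableAt ℝ f x) (hg : DifferentiableAt ℝ g x) :
    pdC j (fun y => f y * g y) x = pdC j f x * g x + f x * pdC j g x := by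
  simp [pdC, fderiv_fun_mul hf hg]
  ring

lemma pdC_ofReal {f : (ι → ℝ) → ℝ} (hf : DifferentiableAt ℝ f x) :
    pdC j (fun y => (f y : ℂ)) x = pdR j f x := by
  have h : HasFDerivAt (fun y => (f y : ℂ)) (Complex.ofRealCLM.comp (fderiv ℝ f x)) x :=
    Complex.ofRealCLM.hasFDerivAt.comp x hf.hasFDerivAt
  simp [pdC, pdR, h.fderiv]

lemma pdC_cexp {f : (ι → ℝ) → ℂ} (hf : DifferentiableAt ℝ f x) :
    pdC j (fun y => Complex.exp (f y)) x = Complex.exp (f x) * pdC j f x := by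
  simp [pdC, hf.hasFDerivAt.cexp.fderiv]

lemma pdC_comp_eval {f : ℝ → ℂ} (i : ι) (hf : DifferentiableAt ℝ f (x i)) :
    pdC j (fun y => f (y i)) x = if j = i then deriv f (x i) else 0 := by
  have h : HasFDerivAt (fun y => f (y i))
      ((ContinuousLinearMap.toSpanSingleton ℝ (deriv f (x i))).comp
        (ContinuousLinearMap.proj i)) x :=
    hf.hasDerivAt.hasFDerivAt.comp x (hasFDerivAt_apply i x)
  simp [pdC, h.fderiv, Pi.single_apply, eq_comm]

variable {F G : (ι → ℝ) → Matrix (Fin r) (Fin r) ℂ}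

lemma mpd_add (hF : ∀ a b, DifferentiableAt ℝ (fun y => F y a b) x)
    (hG : ∀ a b, DifferentiableAt ℝ (fun y => G y a b) x) :
    mpd j (fun y => F y + G y) x = mpd j F x + mpd j G x := by
  ext a b
  simp [mpd, pdC_add (hF a b) (hG a b)]

lemma mpd_smul {c : (ι → ℝ) → ℂ} (hc : DifferentiableAt ℝ c x)
    (hG : ∀ a b, DifferentiableAt ℝ (fun y => G y a b) x) :
    mpd j (fun y => c y • G y) x = pdC j c x • G x + c x • mpd j G x := by
  ext a b
  simp [mpd, pdC_mul hc (hG a b)]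

lemma mpd_comp_eval {A : ℝ → Matrix (Fin r) (Fin r) ℂ} (i : ι)
    (hA : ∀ a b, DifferentiableAt ℝ (fun s => A s a b) (x i)) :
    mpd j (fun y => A (y i)) x = if j = i then mderiv A (x i) else 0 := by
  ext a b
  simp only [mpd, Matrix.of_apply, pdC_comp_eval i (hA a b)]
  split_ifs <;> rfl

end PartialDerivatives

section LogDerivative

variable {ι : Type*} [Fintype ι] [DecidableEq ι] {r : ℕ} {x : ι → ℝ}

lemma inv_mul_mpd_smul {c : (ι → ℝ) → ℂ} {G : (ι → ℝ) → Matrix (Fin r) (Fin r) ℂ}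
    (hc : DifferentiableAt ℝ c x) (hc0 : c x ≠ 0)
    (hG : ∀ a b, DifferentiableAt ℝ (fun y => G y a b) x) (hGdet : IsUnit (G x).det) (j : ι) :
    (c x • G x)⁻¹ * mpd j (fun y => c y • G y) x
      = (pdC j c x / c x) • 1 + (G x)⁻¹ * mpd j G x := by
  have hinv : (c x • G x)⁻¹ = (c x)⁻¹ • (G x)⁻¹ :=
    Matrix.inv_eq_left_inv (by simp [smul_smul, hc0, Matrix.nonsing_inv_mul _ hGdet])
  rw [mpd_smul hc hG, hinv, Matrix.mul_add]
  simp only [Matrix.smul_mul, Matrix.mul_smul, smul_smul]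
  rw [Matrix.nonsing_inv_mul _ hGdet, mul_inv_cancel₀ hc0, one_smul, div_eq_mul_inv]

end LogDerivative

section ScaledPullback

variable {ι : Type*} [Fintype ι] [DecidableEq ι] {r : ℕ} {φ : (ι → ℝ) → ℝ}
  {A : ℝ → Matrix (Fin r) (Fin r) ℂ} (i : ι)

lemma inv_mul_mpd_cexp_neg_smul_comp_eval {y : ι → ℝ} (hφ : DifferentiableAt ℝ φ y)
    (hA : ∀ a b, DifferentiableAt ℝ (fun s => A s a b) (y i)) (hAdet : IsUnit (A (y i)).det)
    (j : ι) :
    (Complex.exp (-(φ y : ℂ)) • A (y i))⁻¹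
        * mpd j (fun y => Complex.exp (-(φ y : ℂ)) • A (y i)) y
      = (-(pdR j φ y : ℂ)) • 1 + if j = i then (A (y i))⁻¹ * mderiv A (y i) else 0 := by
  have hφC : DifferentiableAt ℝ (fun y => -(φ y : ℂ)) y := by fun_prop
  have hAi : ∀ a b, DifferentiableAt ℝ (fun y : ι → ℝ => A (y i) a b) y := fun a b =>
    (hA a b).comp (f := fun y : ι → ℝ => y i) y (differentiableAt_apply i y)
  rw [inv_mul_mpd_smul (G := fun y => A (y i)) hφC.cexp (Complex.exp_ne_zero _) hAi hAdet,
    pdC_cexp hφC, pdC_neg, pdC_ofReal hφ, mpd_comp_eval i hA,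
    mul_div_cancel_left₀ _ (Complex.exp_ne_zero _)]
  split_ifs <;> simp

lemma theta_cexp_neg_smul_comp_eval (hφ : ContDiff ℝ 2 φ)
    (hA : ∀ a b, ContDiff ℝ 2 fun s => A s a b) (hAdet : ∀ s, IsUnit (A s).det)
    (j k : ι) (x : ι → ℝ) :
    Theta (fun y => Complex.exp (-(φ y : ℂ)) • A (y i)) j k x
      = (-(pdR k (pdR j φ) x : ℂ)) • 1 + if j = i ∧ k = i then ThetaOne A (x i) else 0 := by
  have hφ1 : Differentiable ℝ φ := hφ.differentiable two_ne_zero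
  have hφ2 : Differentiable ℝ (fderiv ℝ φ) :=
    (hφ.fderiv_right (m := 1) (by norm_num)).differentiable one_ne_zero
  have hA1 : ∀ a b, Differentiable ℝ fun s => A s a b :=
    fun a b => (hA a b).differentiable two_ne_zero
  have hA2 : ∀ a b, Differentiable ℝ (mderiv A · a b) := fun a b => by
    simpa [mderiv] using (hA a b).differentiable_iteratedDeriv 1 (by norm_num)
  set F : ℝ → Matrix (Fin r) (Fin r) ℂ := fun s => (A s)⁻¹ * mderiv A s
  have hF : ∀ a b, DifferentiableAt ℝ (fun s => F s a b) (x i) := fun a b => by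
    simp only [F, Matrix.mul_apply]
    exact DifferentiableAt.fun_sum fun c _ =>
      (differentiableAt_inv_apply (fun a b => hA1 a b _) (hAdet _).ne_zero a c).mul (hA2 c b _)
  have hpdR : DifferentiableAt ℝ (pdR j φ) x := (hφ2 x).clm_apply (differentiableAt_const _)
  have hpdRC : DifferentiableAt ℝ (fun y => -(pdR j φ y : ℂ)) x := by fun_prop
  have hHess : mpd k (fun y => (-(pdR j φ y : ℂ)) • (1 : Matrix (Fin r) (Fin r) ℂ)) x
      = (-(pdR k (pdR j φ) x : ℂ)) • 1 := by
    rw [mpd_smul (G := fun _ => 1) hpdRC (fun _ _ => differentiableAt_const _), mpd_const,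
      pdC_neg, pdC_ofReal hpdR, smul_zero, add_zero]
  have hlog : (fun y => (Complex.exp (-(φ y : ℂ)) • A (y i))⁻¹
        * mpd j (fun y => Complex.exp (-(φ y : ℂ)) • A (y i)) y)
      = fun y => (-(pdR j φ y : ℂ)) • 1 + if j = i then F (y i) else 0 :=
    funext fun y => inv_mul_mpd_cexp_neg_smul_comp_eval i (hφ1 y) (fun a b => hA1 a b _)
      (hAdet _) j
  rw [Theta, hlog]
  by_cases hj : j = i
  · subst hj
    simp only [if_true, true_and]
    rw [mpd_add (F := fun y => (-(pdR j φ y : ℂ)) • 1) (G := fun y => F (y j))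
      (fun a b => by simpa using hpdRC.mul_const ((1 : Matrix (Fin r) (Fin r) ℂ) a b))
      (fun a b => (hF a b).comp (f := fun y : ι → ℝ => y j) x (differentiableAt_apply j x)),
      hHess, mpd_comp_eval j hF]
    rfl
  · simpa [hj] using hHess

lemma sum_sum_ip_theta_cexp_neg_smul_comp_eval (hφ : ContDiff ℝ 2 φ)
    (hA : ∀ a b, ContDiff ℝ 2 fun s => A s a b) (hAdet : ∀ s, IsUnit (A s).det)
    (x : ι → ℝ) (u : ι → Fin r → ℂ) :
    ∑ j, ∑ k, ip (Complex.exp (-(φ x : ℂ)) • A (x i))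
        ((Theta (fun y => Complex.exp (-(φ y : ℂ)) • A (y i)) j k x).mulVec (u j)) (u k)
      = Complex.exp (-(φ x : ℂ)) * (star (u i) ⬝ᵥ (A (x i) * ThetaOne A (x i)) *ᵥ u i
          - ∑ j, ∑ k, (pdR j (pdR k φ) x : ℂ) * (star (u j) ⬝ᵥ A (x i) *ᵥ u k)) := by
  set G := A (x i)
  have hcurv :
      ∑ j, ∑ k, star (u k) ⬝ᵥ (G * if j = i ∧ k = i then ThetaOne A (x i) else 0) *ᵥ u j
        = star (u i) ⬝ᵥ (G * ThetaOne A (x i)) *ᵥ u i := by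
    rw [Fintype.sum_eq_single i fun j hj => by simp [hj],
      Fintype.sum_eq_single i fun k hk => by simp [hk]]
    simp
  have hhess : ∑ j, ∑ k, (pdR k (pdR j φ) x : ℂ) * (star (u k) ⬝ᵥ G *ᵥ u j)
      = ∑ j, ∑ k, (pdR j (pdR k φ) x : ℂ) * (star (u j) ⬝ᵥ G *ᵥ u k) :=
    Finset.sum_comm
  simp only [theta_cexp_neg_smul_comp_eval i hφ hA hAdet, ip, Matrix.add_mulVec,
    Matrix.smul_mulVec, Matrix.one_mulVec, Matrix.mulVec_add, Matrix.mulVec_smul,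
    dotProduct_add, dotProduct_smul, Matrix.mulVec_mulVec, Matrix.smul_mul, smul_eq_mul]
  rw [← hcurv, ← hhess, mul_sub, Finset.mul_sum, Finset.mul_sum, ← Finset.sum_sub_distrib]
  refine Finset.sum_congr rfl fun j _ => ?_
  rw [Finset.mul_sum, Finset.mul_sum, ← Finset.sum_sub_distrib]
  refine Finset.sum_congr rfl fun k _ => ?_
  ring

end ScaledPullback

theorem statement10 {m r : ℕ} (φ : (Fin (m + 1) → ℝ) → ℝ)
    (hφC : ContDiff ℝ 2 φ) (hφcvx : ConvexOn ℝ Set.univ φ)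
    (A : ℝ → Matrix (Fin r) (Fin r) ℂ)
    (hApos : ∀ y, (A y).PosDef) (hAC : ∀ a b, ContDiff ℝ 2 fun y => A y a b)
    (hΘA : ∀ (y : ℝ) (u : Fin r → ℂ),
      star u ⬝ᵥ (A y * ThetaOne A y).mulVec u ≤ 0) :
    NakanoLogConcave fun x : Fin (m + 1) → ℝ =>
      Complex.exp (-(φ x : ℂ)) • A (x 0) := by
  intro x u
  have hAdet : ∀ s, IsUnit (A s).det := fun s => (A s).isUnit_iff_isUnit_det.mp (hApos s).isUnit
  have hHess : (Matrix.of fun j k => pdR j (pdR k φ) x).PosSemidef :=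
    hφcvx.posSemidef_pdR_pdR (hφC.differentiable two_ne_zero)
      ((hφC.fderiv_right (m := 1) (by norm_num)).differentiable one_ne_zero x)
  have hweighted : 0 ≤ ∑ j, ∑ k, (pdR j (pdR k φ) x : ℂ) * (star (u j) ⬝ᵥ A (x 0) *ᵥ u k) :=
    hHess.map_ofReal.sum_sum_mul_star_dotProduct_mulVec_nonneg (hApos (x 0)).posSemidef u
  have hρ : 0 ≤ Complex.exp (-(φ x : ℂ)) := by
    rw [← Complex.ofReal_neg, ← Complex.ofReal_exp]
    exact_mod_cast (Real.exp_pos _).le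
  rw [sum_sum_ip_theta_cexp_neg_smul_comp_eval 0 hφC hAC hAdet]
  exact mul_nonpos_of_nonneg_of_nonpos hρ (sub_nonpos_of_le ((hΘA _ _).trans hweighted))
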